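/- Let f(z) = z + a_n z^n + Σ_{k≥n+1} a_k z^k − conj(z) with Re(a_n) ≠ 0, where the power series converges in a neighborhood of 0. Then f and g(z) = z + a_n z^n − conj(z) have the same Poincaré index at the origin: ind(f; 0) = ind(g; 0). -/

import Mathlib

/-!
Near `0`, `f - g = ∑_{k > n} a_k z ^ k = O(‖z‖ ^ (n + 1))`, while `‖g z‖ ≥ |Re a_n| / 2 * ‖z‖ ^ n`:
`g z = 2 i Im z + a_n z ^ n`, so either `Im z` dominates, or `z` is almost real and
`Re (a_n z ^ n) ≈ Re a_n * (Re z) ^ n`. Hence `‖f - g‖ < ‖g‖` on all small circles around `0`. There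
`f / g` stays in the slit plane, so adding its principal argument to a continuous argument of `g`
gives one of `f` with the same total increase (Rouché's dog-on-a-leash argument).
-/

open Complex Set

/-- `WindingOn f z0 r m` : the winding of `f` along the positively oriented circle of
radius `r` centered at `z0` equals `m`, expressed via a continuous branch of the argument. -/
def WindingOn (f : ℂ → ℂ) (z0 : ℂ) (r : ℝ) (m : ℤ) : Prop :=
  ∃ θ : ℝ → ℝ, ContinuousOn θ (Set.Icc 0 (2 * Real.pi)) ∧
    (∀ t ∈ Set.Icc 0 (2 * Real.pi),
      f (z0 + r * Complex.exp (Complex.I * t)) =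
        (‖f (z0 + r * Complex.exp (Complex.I * t))‖ : ℂ) *
          Complex.exp (Complex.I * (θ t : ℝ))) ∧
    θ (2 * Real.pi) - θ 0 = 2 * Real.pi * m

/-- The Poincaré index of `f` at `z0` is `m`: the winding along all sufficiently
small circles around `z0` equals `m`. -/
def HasIndex (f : ℂ → ℂ) (z0 : ℂ) (m : ℤ) : Prop :=
  ∃ r0 > 0, ∀ r : ℝ, 0 < r → r < r0 → WindingOn f z0 r m

open Real Filter Topology FormalMultilinearSeries Asymptotics

lemma add_mul_exp_I_mul_eq_circleMap (z0 : ℂ) (r t : ℝ) :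
    z0 + r * exp (I * t) = circleMap z0 r t := by
  rw [circleMap, mul_comm I]

lemma div_mem_slitPlane_of_norm_sub_lt_add {u v : ℂ} (h : ‖u - v‖ < ‖u‖ + ‖v‖) :
    u / v ∈ slitPlane := by
  rw [mem_slitPlane_iff_not_le_zero]
  intro hq
  have hv : v ≠ 0 := by rintro rfl; simp at h
  obtain ⟨s, hs, hqs⟩ : ∃ s : ℝ, 0 ≤ s ∧ u / v = -s := by
    obtain ⟨hre, him⟩ := Complex.nonpos_iff.mp hq
    exact ⟨-(u / v).re, by linarith, Complex.ext (by simp) (by simp [him])⟩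
  -- `u` is a nonnegative multiple of `-v`, so the triangle inequality for `u + (-v)` is an equality
  have hu : u = s • -v := by
    rw [div_eq_iff hv] at hqs
    rw [hqs, Complex.real_smul]; ring
  have := (SameRay.sameRay_nonneg_smul_left (-v) hs).norm_add
  rw [← hu, ← sub_eq_add_neg, norm_neg] at this
  exact h.ne this

lemma WindingOn.of_norm_sub_lt_add {F G : ℂ → ℂ} {z0 : ℂ} {r : ℝ} {m : ℤ}
    (hF : ContinuousOn (fun t => F (circleMap z0 r t)) (Icc 0 (2 * π)))
    (hG : ContinuousOn (fun t => G (circleMap z0 r t)) (Icc 0 (2 * π)))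
    (hFG : ∀ t ∈ Icc 0 (2 * π),
      ‖F (circleMap z0 r t) - G (circleMap z0 r t)‖ <
        ‖F (circleMap z0 r t)‖ + ‖G (circleMap z0 r t)‖)
    (hGm : WindingOn G z0 r m) : WindingOn F z0 r m := by
  obtain ⟨θ, hθc, hθG, hθm⟩ := hGm
  simp only [WindingOn, add_mul_exp_I_mul_eq_circleMap] at hθG ⊢
  set q : ℝ → ℂ := fun t => F (circleMap z0 r t) / G (circleMap z0 r t)
  have hGne : ∀ t ∈ Icc 0 (2 * π), G (circleMap z0 r t) ≠ 0 := fun t ht h0 => by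
    simpa [h0] using hFG t ht
  have hq : ∀ t ∈ Icc 0 (2 * π), q t ∈ slitPlane := fun t ht =>
    div_mem_slitPlane_of_norm_sub_lt_add (hFG t ht)
  refine ⟨fun t => θ t + arg (q t), hθc.add fun t ht =>
    (continuousAt_arg (hq t ht)).comp_continuousWithinAt ((hF.div hG hGne) t ht), ?_, ?_⟩
  · intro t ht
    have hFq : F (circleMap z0 r t) = q t * G (circleMap z0 r t) :=
      (div_mul_cancel₀ _ (hGne t ht)).symm
    calc F (circleMap z0 r t)
        = (‖q t‖ * exp (arg (q t) * I)) * (‖G (circleMap z0 r t)‖ * exp (I * θ t)) := by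
          rw [norm_mul_exp_arg_mul_I, ← hθG t ht, hFq]
      _ = ‖F (circleMap z0 r t)‖ * exp (I * ↑(θ t + arg (q t))) := by
          rw [hFq, norm_mul]; push_cast
          rw [mul_add, Complex.exp_add]; ring_nf
  · have hq_per : q (2 * π) = q 0 := by
      simp only [q, ← (periodic_circleMap z0 r) 0, zero_add]
    simp only [hq_per]
    linarith

lemma HasIndex.of_eventually_norm_sub_lt_add {f g : ℂ → ℂ} {z0 : ℂ} {m : ℤ}
    (hf : ∀ᶠ z in 𝓝 z0, ContinuousAt f z) (hg : ∀ᶠ z in 𝓝 z0, ContinuousAt g z)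
    (hfg : ∀ᶠ z in 𝓝[≠] z0, ‖f z - g z‖ < ‖f z‖ + ‖g z‖) (hgm : HasIndex g z0 m) :
    HasIndex f z0 m := by
  obtain ⟨δ, hδ, hnear⟩ :=
    Metric.eventually_nhds_iff.mp (hf.and (hg.and (eventually_nhdsWithin_iff.mp hfg)))
  obtain ⟨r0, hr0, hgw⟩ := hgm
  refine ⟨min r0 δ, lt_min hr0 hδ, fun r hr hrlt => ?_⟩
  have hcircle : ∀ t, ContinuousAt f (circleMap z0 r t) ∧ ContinuousAt g (circleMap z0 r t) ∧
      ‖f (circleMap z0 r t) - g (circleMap z0 r t)‖ <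
        ‖f (circleMap z0 r t)‖ + ‖g (circleMap z0 r t)‖ := fun t => by
    have hdist : dist (circleMap z0 r t) z0 = r := circleMap_mem_sphere z0 hr.le t
    obtain ⟨hfc, hgc, hlt⟩ := hnear (hdist.trans_lt (hrlt.trans_le (min_le_right _ _)))
    exact ⟨hfc, hgc, hlt (circleMap_ne_center hr.ne')⟩
  exact WindingOn.of_norm_sub_lt_add
    (fun t _ => (hcircle t).1.comp_continuousWithinAt (continuous_circleMap z0 r).continuousWithinAt)
    (fun t _ => (hcircle t).2.1.comp_continuousWithinAt (continuous_circleMap z0 r).continuousWithinAt)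
    (fun t _ => (hcircle t).2.2) (hgw r hr (hrlt.trans_le (min_le_left _ _)))

lemma hasIndex_iff_of_eventually_norm_sub_lt_add {f g : ℂ → ℂ} {z0 : ℂ}
    (hf : ∀ᶠ z in 𝓝 z0, ContinuousAt f z) (hg : ∀ᶠ z in 𝓝 z0, ContinuousAt g z)
    (hfg : ∀ᶠ z in 𝓝[≠] z0, ‖f z - g z‖ < ‖f z‖ + ‖g z‖) (m : ℤ) :
    HasIndex f z0 m ↔ HasIndex g z0 m :=
  ⟨.of_eventually_norm_sub_lt_add hg hf (hfg.mono fun z hz => by rwa [norm_sub_rev, add_comm]),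
    .of_eventually_norm_sub_lt_add hf hg hfg⟩

lemma norm_pow_sub_pow_le {R : Type*} [SeminormedCommRing R] [NormOneClass R] {z w : R} {r : ℝ}
    (hz : ‖z‖ ≤ r) (hw : ‖w‖ ≤ r) (n : ℕ) : ‖z ^ n - w ^ n‖ ≤ n * r ^ (n - 1) * ‖z - w‖ := by
  rw [← geom_sum₂_mul]
  refine (norm_mul_le _ _).trans (mul_le_mul_of_nonneg_right ?_ (norm_nonneg _))
  calc ‖∑ i ∈ Finset.range n, z ^ i * w ^ (n - 1 - i)‖
      ≤ ∑ i ∈ Finset.range n, ‖z‖ ^ i * ‖w‖ ^ (n - 1 - i) :=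
        norm_sum_le_of_le _ fun i _ => (norm_mul_le _ _).trans
          (mul_le_mul (norm_pow_le _ _) (norm_pow_le _ _) (norm_nonneg _) (by positivity))
    _ ≤ ∑ _i ∈ Finset.range n, r ^ (n - 1) := Finset.sum_le_sum fun i hi => by
        have hr : 0 ≤ r := (norm_nonneg _).trans hz
        calc ‖z‖ ^ i * ‖w‖ ^ (n - 1 - i) ≤ r ^ i * r ^ (n - 1 - i) := by gcongr
          _ = r ^ (n - 1) := by rw [← pow_add]; congr 1; have := Finset.mem_range.mp hi; omega
    _ = n * r ^ (n - 1) := by simp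

lemma abs_re_mul_pow_ge (c z : ℂ) (n : ℕ) :
    |c.re| * ‖z‖ ^ n - 2 * ‖c‖ * n * ‖z‖ ^ (n - 1) * |z.im| ≤ |(c * z ^ n).re| := by
  set x : ℂ := (z.re : ℂ)
  have hx : ‖x‖ ≤ ‖z‖ := by simpa [x] using Complex.abs_re_le_norm z
  have hzx : ‖z - x‖ = |z.im| := by
    rw [show z - x = z.im * I by apply Complex.ext <;> simp [x], norm_mul, Complex.norm_I,
      Complex.norm_real, Real.norm_eq_abs, mul_one]
  have hdiff := norm_pow_sub_pow_le le_rfl hx n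
  rw [hzx] at hdiff
  have hsplit : (c * z ^ n).re = c.re * z.re ^ n + (c * (z ^ n - x ^ n)).re := by
    simp [x, ← Complex.ofReal_pow, mul_sub]
  have hmain : |c.re| * (‖z‖ ^ n - n * ‖z‖ ^ (n - 1) * |z.im|) ≤ |c.re * z.re ^ n| := by
    rw [abs_mul, abs_pow]
    refine mul_le_mul_of_nonneg_left ?_ (abs_nonneg _)
    have := norm_sub_norm_le (z ^ n) (x ^ n)
    simp only [norm_pow, x, Complex.norm_real, Real.norm_eq_abs] at this hdiff ⊢
    linarith
  have herr : |(c * (z ^ n - x ^ n)).re| ≤ ‖c‖ * (n * ‖z‖ ^ (n - 1) * |z.im|) :=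
    (Complex.abs_re_le_norm _).trans (by rw [norm_mul]; gcongr)
  have hcre : |c.re| ≤ ‖c‖ := Complex.abs_re_le_norm c
  have hE : 0 ≤ n * ‖z‖ ^ (n - 1) * |z.im| := by positivity
  have htri := abs_sub_abs_le_abs_sub (c.re * z.re ^ n) (-(c * (z ^ n - x ^ n)).re)
  rw [abs_neg, sub_neg_eq_add, ← hsplit] at htri
  linarith [mul_le_mul_of_nonneg_right hcre hE]

lemma eventually_norm_add_mul_pow_sub_conj_ge (c : ℂ) (hc : c.re ≠ 0) {n : ℕ} (hn : 2 ≤ n) :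
    ∀ᶠ z in 𝓝 (0 : ℂ), |c.re| / 2 * ‖z‖ ^ n ≤ ‖z + c * z ^ n - (starRingEnd ℂ) z‖ := by
  have hε : 0 < |c.re| := abs_pos.mpr hc
  have hsmall : ∀ᶠ z in 𝓝 (0 : ℂ), 2 * n * ‖c‖ ^ 2 * ‖z‖ ^ (n - 1) < |c.re| / 2 := by
    have hcont : Continuous fun z : ℂ => 2 * n * ‖c‖ ^ 2 * ‖z‖ ^ (n - 1) := by fun_prop
    refine (hcont.tendsto' 0 0 ?_).eventually_lt_const (by positivity)
    simp [zero_pow (show n - 1 ≠ 0 by omega)]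
  filter_upwards [hsmall] with z hz
  have hcre : |c.re| ≤ ‖c‖ := Complex.abs_re_le_norm c
  have hre : (z + c * z ^ n - (starRingEnd ℂ) z).re = (c * z ^ n).re := by simp
  have him : (z + c * z ^ n - (starRingEnd ℂ) z).im = 2 * z.im + (c * z ^ n).im := by simp; ring
  have hczn : ‖c * z ^ n‖ = ‖c‖ * ‖z‖ ^ n := by rw [norm_mul, norm_pow]
  have hzn : 0 ≤ ‖z‖ ^ n := by positivity
  rcases le_or_gt (‖c‖ * ‖z‖ ^ n) |z.im| with hbig | hsmall_im
  · have hnorm_im := Complex.abs_im_le_norm (z + c * z ^ n - (starRingEnd ℂ) z)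
    have hczn_im := Complex.abs_im_le_norm (c * z ^ n)
    have htri := abs_sub_abs_le_abs_sub (2 * z.im) (-(c * z ^ n).im)
    rw [him] at hnorm_im
    rw [abs_neg, sub_neg_eq_add, abs_mul, abs_two] at htri
    linarith [mul_le_mul_of_nonneg_right hcre hzn, mul_nonneg hε.le hzn]
  · have hnorm_re := Complex.abs_re_le_norm (z + c * z ^ n - (starRingEnd ℂ) z)
    rw [hre] at hnorm_re
    have herr : 2 * ‖c‖ * n * ‖z‖ ^ (n - 1) * |z.im| ≤
        2 * n * ‖c‖ ^ 2 * ‖z‖ ^ (n - 1) * ‖z‖ ^ n :=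
      (mul_le_mul_of_nonneg_left hsmall_im.le (by positivity)).trans_eq (by ring)
    linarith [abs_re_mul_pow_ge c z n, mul_le_mul_of_nonneg_right hz.le hzn]

lemma hasFPowerSeriesOnBall_ofScalars {a : ℕ → ℂ} {F : ℂ → ℂ} {R : ℝ} (hR : 0 < R)
    (hF : ∀ z : ℂ, ‖z‖ < R → HasSum (fun k => a k * z ^ k) (F z)) :
    HasFPowerSeriesOnBall F (ofScalars ℂ a) 0 (ENNReal.ofReal R) where
  r_le := ENNReal.le_of_forall_nnreal_lt fun r hr => by
    have hrR : ‖((r : ℝ) : ℂ)‖ < R := by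
      simpa using (ENNReal.ofReal_lt_ofReal_iff_of_nonneg r.2).mp (by simpa using hr)
    refine (ofScalars ℂ a).le_radius_of_tendsto (l := 0) ?_
    simpa [ofScalars_norm] using (hF _ hrR).summable.tendsto_atTop_zero.norm
  r_pos := ENNReal.ofReal_pos.mpr hR
  hasSum {z} hz := by
    rw [Metric.mem_eball, edist_zero_right, ← ofReal_norm, ENNReal.ofReal_lt_ofReal_iff hR] at hz
    simpa [ofScalars_apply_eq, mul_comm] using hF z hz

lemma partialSum_ofScalars_eq {a : ℕ → ℂ} {n : ℕ} (hn : 2 ≤ n) (ha0 : a 0 = 0) (ha1 : a 1 = 1)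
    (hmin : ∀ m : ℕ, 2 ≤ m → m < n → a m = 0) (z : ℂ) :
    (ofScalars ℂ a).partialSum (n + 1) z = z + a n * z ^ n := by
  have hlow : ∑ k ∈ Finset.range n, a k * z ^ k = z := by
    rw [Finset.sum_eq_single_of_mem 1 (Finset.mem_range.mpr (by omega)), ha1, one_mul, pow_one]
    intro k hk hk1
    obtain rfl | hk2 : k = 0 ∨ 2 ≤ k := by omega
    · rw [ha0, zero_mul]
    · rw [hmin k hk2 (Finset.mem_range.mp hk), zero_mul]
  simp only [partialSum, ofScalars_apply_eq, smul_eq_mul, Finset.sum_range_succ, hlow]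

lemma eventually_norm_sub_lt_of_isLittleO {𝕜 E : Type*} [NormedField 𝕜] [NormedAddCommGroup E]
    {f g : 𝕜 → E} {n : ℕ} {c : ℝ} (hc : 0 < c)
    (hfg : (fun z => f z - g z) =o[𝓝 0] fun z => z ^ n)
    (hg : ∀ᶠ z in 𝓝 0, c * ‖z‖ ^ n ≤ ‖g z‖) :
    ∀ᶠ z in 𝓝[≠] 0, ‖f z - g z‖ < ‖g z‖ := by
  filter_upwards [nhdsWithin_le_nhds (hfg.def (half_pos hc)), nhdsWithin_le_nhds hg,
    self_mem_nhdsWithin] with z hfgz hgz hz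
  have hzn : 0 < ‖z‖ ^ n := pow_pos (norm_pos_iff.mpr hz) n
  rw [norm_pow] at hfgz
  linarith [mul_pos hc hzn]

theorem index_truncation (a : ℕ → ℂ) (f : ℂ → ℂ) (R : ℝ) (hR : 0 < R)
    (ha0 : a 0 = 0) (ha1 : a 1 = 1)
    (n : ℕ) (hn2 : 2 ≤ n) (hmin : ∀ m : ℕ, 2 ≤ m → m < n → a m = 0)
    (hre : (a n).re ≠ 0)
    (hsum : ∀ z : ℂ, ‖z‖ < R →
      HasSum (fun k : ℕ => a k * z ^ k) (f z + (starRingEnd ℂ) z))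
    (g : ℂ → ℂ) (hg : ∀ z, g z = z + a n * z ^ n - (starRingEnd ℂ) z) :
    ∀ m : ℤ, HasIndex f 0 m ↔ HasIndex g 0 m := by
  have hp := hasFPowerSeriesOnBall_ofScalars hR hsum
  have hf_eq : f = fun z => (f z + (starRingEnd ℂ) z) - (starRingEnd ℂ) z := by simp
  have hg_eq : g = fun z => z + a n * z ^ n - (starRingEnd ℂ) z := funext hg
  have hf_cont : ∀ᶠ z in 𝓝 0, ContinuousAt f z :=
    hp.analyticAt.eventually_analyticAt.mono fun z hz => by
      rw [hf_eq]; exact hz.continuousAt.sub Complex.continuous_conj.continuousAt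
  have hg_cont : ∀ᶠ z in 𝓝 0, ContinuousAt g z := .of_forall fun z => by
    rw [hg_eq]; fun_prop
  have hdiff : (fun z => f z - g z) =o[𝓝 0] fun z => z ^ n := by
    have hbig := hp.hasFPowerSeriesAt.isBigO_sub_partialSum_pow (n + 1)
    simp only [zero_add, partialSum_ofScalars_eq hn2 ha0 ha1 hmin] at hbig
    refine (hbig.trans_isLittleO ?_).congr_left fun z => by rw [hg]; ring
    simpa using (isLittleO_pow_pow (𝕜 := ℂ) n.lt_succ_self).norm_left
  have hg_lower := eventually_norm_add_mul_pow_sub_conj_ge (a n) hre hn2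
  simp only [← hg] at hg_lower
  exact hasIndex_iff_of_eventually_norm_sub_lt_add hf_cont hg_cont
    ((eventually_norm_sub_lt_of_isLittleO (by positivity) hdiff hg_lower).mono
      fun z hz => hz.trans_le (le_add_of_nonneg_left (norm_nonneg _)))
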